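/- Let A ∈ SL₂(ℤ) be hyperbolic with eigenvalue ε, |ε| > 1, and let K = ℚ(ε). Then for every k ≥ 1, gcd(A^k - I)² · N > |N_{K/ℚ}(ε^k - 1)| for some fixed positive integer N independent of k, where N_{K/ℚ} denotes the field norm. Equivalently, |N_{K/ℚ}(ε^k - 1)| divides gcd(A^k - I)² times a bounded integer. -/

import Mathlib

/-!
By Cayley–Hamilton and division of `X ^ k` by the characteristic polynomial `X² - t X + 1`
(`t = tr A = ε + ε⁻¹`), there are integers `p, q` with `A ^ k = p A + q` and
`z ^ k = p z + q` for both roots `z = ε, ε⁻¹`. Hence `A ^ k - 1 = p A + (q - 1)` has entries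
divisible by `g = gcd (p, q - 1)`, and its determinant `Q(p, q - 1)`, with
`Q(x, y) = x² + x y t + y²`, equals `(ε ^ k - 1)(ε⁻ᵏ - 1)`.

The arithmetic input is `det (A ^ k) = 1`, i.e. `Q(x, y + 1) = 1` for `x = p, y = q - 1`, which says
`t x + 2 y = -Q(x, y)`. Squaring gives `Q(Q - 4) = (t² - 4) x²`, and also
`x² - y² = (1 + y) Q`, so `Q` divides `(t² - 4) x²` and `(t² - 4) y²`, hence `(t² - 4) g²`.
As `ε ≠ ±1` and `ε ^ k ≠ 1`, neither `t² - 4` nor `Q` vanishes, and `N = |t² - 4| + 1` works.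
-/

open Polynomial

/-- The gcd of the entries of an integer matrix. -/
def matGcd {r : ℕ} (B : Matrix (Fin r) (Fin r) ℤ) : ℕ :=
  Finset.univ.gcd fun p : Fin r × Fin r => (B p.1 p.2).natAbs

theorem Int.sq_add_mul_mul_add_sq_dvd_mul_gcd_sq {t x y : ℤ}
    (h : x ^ 2 + x * (y + 1) * t + (y + 1) ^ 2 = 1) :
    x ^ 2 + x * y * t + y ^ 2 ∣ (t ^ 2 - 4) * (Int.gcd x y : ℤ) ^ 2 := by
  have hx : x ^ 2 + x * y * t + y ^ 2 ∣ (t ^ 2 - 4) * x ^ 2 :=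
    ⟨x ^ 2 + x * y * t + y ^ 2 - 4, by
      linear_combination (t * x + 2 * y - (x ^ 2 + x * y * t + y ^ 2)) * h⟩
  have hy : x ^ 2 + x * y * t + y ^ 2 ∣ (t ^ 2 - 4) * y ^ 2 :=
    ⟨x ^ 2 + x * y * t + y ^ 2 - 4 - (t ^ 2 - 4) * (1 + y), by
      linear_combination (t * x + 2 * y - (x ^ 2 + x * y * t + y ^ 2) + (t ^ 2 - 4) * y) * h⟩
  have := Int.dvd_coe_gcd hx hy
  rw [Int.gcd_mul_left, Int.pow_gcd_pow, Nat.cast_mul, Int.natCast_natAbs, Nat.cast_pow] at this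
  rw [← dvd_abs, abs_mul, abs_pow, Nat.abs_cast]
  exact this

theorem Int.abs_lt_sq_mul_abs_add_one_of_dvd {n D : ℤ} {d : ℕ} (hn : n ∣ D * d ^ 2)
    (hD : D ≠ 0) (hd : d ≠ 0) : |n| < d ^ 2 * (|D| + 1) := by
  have hle : |n| ≤ |D| * d ^ 2 := by
    simpa [abs_mul] using Int.le_of_dvd (by positivity) ((abs_dvd_abs _ _).mpr hn)
  have : (0 : ℤ) < d ^ 2 := by positivity
  nlinarith

theorem pow_eq_smul_add_algebraMap_of_aeval_eq_zero {R S : Type*} [CommRing R] [Ring S]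
    [Algebra R S] {f : R[X]} (hf : f.Monic) (hdeg : f.natDegree = 2) {z : S}
    (hz : aeval z f = 0) (k : ℕ) :
    z ^ k = (X ^ k %ₘ f).coeff 1 • z + algebraMap R S ((X ^ k %ₘ f).coeff 0) := by
  have hr : (X ^ k %ₘ f).natDegree ≤ 1 := by
    have := natDegree_modByMonic_lt (X ^ k) hf (by rintro rfl; simp at hdeg)
    omega
  calc z ^ k = aeval z (X ^ k %ₘ f) := by
        rw [aeval_modByMonic_eq_self_of_root hz, map_pow, aeval_X]
    _ = _ := by
      conv_lhs => rw [eq_X_add_C_of_natDegree_le_one hr]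
      simp [Algebra.smul_def]

theorem Matrix.det_fin_two_smul_add_algebraMap {R : Type*} [CommRing R]
    (A : Matrix (Fin 2) (Fin 2) R) (x y : R) :
    (x • A + algebraMap R _ y).det = x ^ 2 * A.det + x * y * A.trace + y ^ 2 := by
  simp [Matrix.det_fin_two, Matrix.trace_fin_two, Matrix.algebraMap_eq_diagonal]
  ring

theorem Matrix.aeval_charpoly_eq_zero_of_isRoot {R S n : Type*} [CommRing R] [CommRing S]
    [Algebra R S] [Fintype n] [DecidableEq n] (A : Matrix n n R) {z : S}
    (hz : (A.map (algebraMap R S)).charpoly.IsRoot z) : aeval z A.charpoly = 0 := by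
  rwa [aeval_def, eval₂_eq_eval_map, ← Matrix.charpoly_map]

theorem dvd_matGcd {r : ℕ} {B : Matrix (Fin r) (Fin r) ℤ} {g : ℤ} (h : ∀ i j, g ∣ B i j) :
    g.natAbs ∣ matGcd B :=
  Finset.dvd_gcd fun p _ => Int.natAbs_dvd_natAbs.mpr (h p.1 p.2)

theorem matGcd_eq_zero_iff {r : ℕ} {B : Matrix (Fin r) (Fin r) ℤ} : matGcd B = 0 ↔ B = 0 := by
  simp [matGcd, Finset.gcd_eq_zero_iff, ← Matrix.ext_iff]

theorem gcd_dvd_matGcd_smul_add_algebraMap {r : ℕ} (A : Matrix (Fin r) (Fin r) ℤ) (x y : ℤ) :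
    Int.gcd x y ∣ matGcd (x • A + algebraMap ℤ _ y) := by
  have h := dvd_matGcd (B := x • A + algebraMap ℤ _ y) (g := Int.gcd x y) fun i j => by
    simp only [Matrix.add_apply, Matrix.smul_apply, smul_eq_mul, Matrix.algebraMap_matrix_apply]
    split_ifs
    · exact dvd_add (Int.gcd_dvd_left x y |>.mul_right _) (by simpa using Int.gcd_dvd_right x y)
    · simpa using Int.gcd_dvd_left x y |>.mul_right _
  simpa using h

theorem Matrix.exists_pow_eq_smul_add_algebraMap {R S : Type*} [CommRing R] [Nontrivial R]
    [Ring S] [Algebra R S] (A : Matrix (Fin 2) (Fin 2) R) (k : ℕ) :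
    ∃ p q : R, A ^ k = p • A + algebraMap R _ q ∧
      ∀ z : S, aeval z A.charpoly = 0 → z ^ k = p • z + algebraMap R S q := by
  have hdeg : A.charpoly.natDegree = 2 := by simp [Matrix.charpoly_natDegree_eq_dim]
  exact ⟨_, _, pow_eq_smul_add_algebraMap_of_aeval_eq_zero A.charpoly_monic hdeg
    A.aeval_self_charpoly k,
    fun z hz => pow_eq_smul_add_algebraMap_of_aeval_eq_zero A.charpoly_monic hdeg hz k⟩

theorem Matrix.algebraMap_trace_eq_add_inv {R K : Type*} [CommRing R] [Nontrivial R] [Field K]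
    [Algebra R K] {A : Matrix (Fin 2) (Fin 2) R} (hdet : A.det = 1) {z : K} (hz0 : z ≠ 0)
    (hz : aeval z A.charpoly = 0) : algebraMap R K A.trace = z + z⁻¹ := by
  rw [A.charpoly_fin_two, hdet] at hz
  simp only [map_add, map_sub, map_mul, map_pow, aeval_X, aeval_C, map_one] at hz
  field_simp
  linear_combination -hz

theorem Matrix.det_pow_sub_one_of_pow_eq {R : Type*} [CommRing R]
    {A : Matrix (Fin 2) (Fin 2) R} (hdet : A.det = 1) {k : ℕ} {p q : R}
    (hAk : A ^ k = p • A + algebraMap R _ q) :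
    (A ^ k - 1).det = p ^ 2 + p * (q - 1) * A.trace + (q - 1) ^ 2 := by
  rw [hAk, add_sub_assoc, ← map_one (algebraMap R (Matrix (Fin 2) (Fin 2) R)), ← map_sub,
    Matrix.det_fin_two_smul_add_algebraMap, hdet, mul_one]

theorem Matrix.det_pow_sub_one_dvd {A : Matrix (Fin 2) (Fin 2) ℤ} (hdet : A.det = 1) (k : ℕ) :
    (A ^ k - 1).det ∣ (A.trace ^ 2 - 4) * (matGcd (A ^ k - 1) : ℤ) ^ 2 := by
  obtain ⟨p, q, hAk, -⟩ := A.exists_pow_eq_smul_add_algebraMap (S := ℤ) k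
  have hunit : p ^ 2 + p * (q - 1 + 1) * A.trace + (q - 1 + 1) ^ 2 = 1 := by
    have := A.det_fin_two_smul_add_algebraMap p q
    rw [← hAk, Matrix.det_pow, hdet, one_pow, mul_one] at this
    simpa using this.symm
  have hB : A ^ k - 1 = p • A + algebraMap ℤ _ (q - 1) := by rw [hAk, map_sub, map_one]; abel
  rw [Matrix.det_pow_sub_one_of_pow_eq hdet hAk, hB]
  exact (Int.sq_add_mul_mul_add_sq_dvd_mul_gcd_sq hunit).trans <| mul_dvd_mul_left _ <|
    pow_dvd_pow_of_dvd (Int.natCast_dvd_natCast.mpr (gcd_dvd_matGcd_smul_add_algebraMap A _ _)) 2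

theorem Matrix.pow_sub_one_mul_inv_pow_sub_one_eq_det {K : Type*} [Field K]
    {A : Matrix (Fin 2) (Fin 2) ℤ} (hdet : A.det = 1) {z : K} (hz0 : z ≠ 0)
    (hz : aeval z A.charpoly = 0) (hz' : aeval z⁻¹ A.charpoly = 0) (k : ℕ) :
    (z ^ k - 1) * (z⁻¹ ^ k - 1) = ((A ^ k - 1).det : K) := by
  obtain ⟨p, q, hAk, hzk⟩ := A.exists_pow_eq_smul_add_algebraMap (S := K) k
  have ht : (A.trace : K) = z + z⁻¹ := by
    simpa using Matrix.algebraMap_trace_eq_add_inv hdet hz0 hz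
  rw [hzk z hz, hzk z⁻¹ hz', Matrix.det_pow_sub_one_of_pow_eq hdet hAk]
  push_cast
  rw [ht]
  linear_combination (p : K) ^ 2 * mul_inv_cancel₀ hz0

theorem Int.sq_sub_four_ne_zero {t : ℤ} {ε : ℝ} (hε : 1 < |ε|) (ht : (t : ℝ) = ε + ε⁻¹) :
    t ^ 2 - 4 ≠ 0 := by
  have hε0 : ε ≠ 0 := by rintro rfl; norm_num at hε
  have hne : ε ≠ ε⁻¹ := fun h => by
    have : |ε⁻¹| < 1 := by rw [abs_inv]; exact inv_lt_one_of_one_lt₀ hε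
    rw [← h] at this; linarith
  have : ((t ^ 2 - 4 : ℤ) : ℝ) = (ε - ε⁻¹) ^ 2 := by
    push_cast; rw [ht]; linear_combination 4 * mul_inv_cancel₀ hε0
  exact_mod_cast this ▸ pow_ne_zero 2 (sub_ne_zero.mpr hne)

theorem pow_sub_one_mul_inv_pow_sub_one_ne_zero {ε : ℝ} (hε : 1 < |ε|) {k : ℕ} (hk : 1 ≤ k) :
    (ε ^ k - 1) * (ε⁻¹ ^ k - 1) ≠ 0 := by
  have hεk : 1 < |ε ^ k| := by rw [abs_pow]; exact one_lt_pow₀ hε (by omega)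
  have hεk1 : ε ^ k ≠ 1 := by rintro h; simp [h] at hεk
  rw [inv_pow]
  exact mul_ne_zero (sub_ne_zero.mpr hεk1) (sub_ne_zero.mpr (inv_ne_one.mpr hεk1))

theorem stmt_9 (A : Matrix (Fin 2) (Fin 2) ℤ) (hdet : A.det = 1)
    (ε : ℝ) (hε : 1 < |ε|)
    (hchar : (A.map (Int.cast : ℤ → ℝ)).charpoly = (X - C ε) * (X - C ε⁻¹)) :
    ∃ N : ℕ, 0 < N ∧ ∀ k : ℕ, 1 ≤ k →
      |(ε ^ k - 1) * ((ε⁻¹) ^ k - 1)| < ((matGcd (A ^ k - 1) : ℝ)) ^ 2 * N := by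
  have hε0 : ε ≠ 0 := by rintro rfl; norm_num at hε
  have hroot : ∀ z, z = ε ∨ z = ε⁻¹ → aeval z A.charpoly = 0 := fun z hz =>
    A.aeval_charpoly_eq_zero_of_isRoot <| by
      rw [algebraMap_int_eq, Int.coe_castRingHom, hchar]
      rcases hz with rfl | rfl <;> simp
  have ht : (A.trace : ℝ) = ε + ε⁻¹ := by
    simpa using Matrix.algebraMap_trace_eq_add_inv hdet hε0 (hroot ε (.inl rfl))
  refine ⟨(A.trace ^ 2 - 4).natAbs + 1, by omega, fun k hk => ?_⟩
  have hnorm := Matrix.pow_sub_one_mul_inv_pow_sub_one_eq_det hdet hε0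
    (hroot ε (.inl rfl)) (hroot ε⁻¹ (.inr rfl)) k
  have hd : matGcd (A ^ k - 1) ≠ 0 := by
    rw [Ne, matGcd_eq_zero_iff]
    intro h
    apply pow_sub_one_mul_inv_pow_sub_one_ne_zero hε hk
    rw [hnorm, h, Matrix.det_zero, Int.cast_zero]
  rw [hnorm, Nat.cast_add, Nat.cast_natAbs, Nat.cast_one]
  exact_mod_cast Int.abs_lt_sq_mul_abs_add_one_of_dvd (Matrix.det_pow_sub_one_dvd hdet k)
    (Int.sq_sub_four_ne_zero hε ht) hd
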